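/- arXiv:2506.15488 — 4 statements merged into one kernel-verified Lean document; each statement's English description precedes it below -/
import Mathlib

section
/- Let n be a positive integer and P ≥ 1 a real number. For any finite set F ⊆ {(i,j,k) ∈ {1,…,n}³ : i > j > k} with |F| ≥ n(n−1)(n−2)/(6P), one has |F| + 2|φ₁(F) ∪ φ₂(F) ∪ φ₃(F)| ≥ n(n−1)(n−2)/(6P) + 2(n(n−1)(n−2)/P)^{1/3}. -/
/-!
A strictly decreasing triple `i > j > k` is determined by the set `{i, j, k}`, so `F` embeds
into the `3`-subsets of `S = φ₁(F) ∪ φ₂(F) ∪ φ₃(F)` and `6|F| ≤ 6 (|S| choose 3) ≤ |S|³`.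
With the hypothesis on `|F|` this gives `n(n-1)(n-2)/P ≤ |S|³`, so the cube root term is at
most `|S|`.
-/

open Finset Nat

section StrictlyDecreasingTriples

variable {α : Type*} [LinearOrder α]

theorem eq_of_insert_insert_singleton_eq {a b c a' b' c' : α}
    (hab : b < a) (hbc : c < b) (hab' : b' < a') (hbc' : c' < b')
    (h : ({a, b, c} : Finset α) = {a', b', c'}) : a = a' ∧ b = b' ∧ c = c' := by
  have mem : ∀ x, (x = a ∨ x = b ∨ x = c) ↔ (x = a' ∨ x = b' ∨ x = c') := fun x => by
    simpa using congrArg (x ∈ ·) h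
  have bounds : ∀ {a b c x : α}, b < a → c < b → (x = a ∨ x = b ∨ x = c) →
      c ≤ x ∧ x ≤ a := by
    rintro a b c x hab hbc (rfl | rfl | rfl) <;> constructor <;> order
  have ha : a = a' := le_antisymm (bounds hab' hbc' ((mem a).1 (by simp))).2
    (bounds hab hbc ((mem a').2 (by simp))).2
  have hc : c = c' := le_antisymm (bounds hab hbc ((mem c').2 (by simp))).1
    (bounds hab' hbc' ((mem c).1 (by simp))).1
  refine ⟨ha, ?_, hc⟩
  rcases (mem b).1 (by simp) with hb | hb | hb <;> order

theorem card_le_choose_three_card_coords {F : Finset (α × α × α)}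
    (hF : ∀ p ∈ F, p.2.1 < p.1 ∧ p.2.2 < p.2.1) :
    #F ≤ (#((F.image fun p => p.1) ∪ (F.image fun p => p.2.1) ∪
      (F.image fun p => p.2.2))).choose 3 := by
  rw [← card_powersetCard]
  refine card_le_card_of_injOn (fun p => {p.1, p.2.1, p.2.2}) (fun p hp => ?_) ?_
  · obtain ⟨h12, h23⟩ := hF p hp
    refine mem_powersetCard.2
      ⟨?_, card_eq_three.2 ⟨_, _, _, h12.ne', (h23.trans h12).ne', h23.ne', rfl⟩⟩
    simp only [insert_subset_iff, singleton_subset_iff, mem_union, mem_image]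
    exact ⟨.inl (.inl ⟨p, hp, rfl⟩), .inl (.inr ⟨p, hp, rfl⟩), .inr ⟨p, hp, rfl⟩⟩
  · rintro ⟨a, b, c⟩ hp ⟨a', b', c'⟩ hq h
    obtain ⟨rfl, rfl, rfl⟩ :=
      eq_of_insert_insert_singleton_eq (hF _ hp).1 (hF _ hp).2 (hF _ hq).1 (hF _ hq).2 h
    rfl

theorem six_mul_card_le_card_coords_pow_three {F : Finset (α × α × α)}
    (hF : ∀ p ∈ F, p.2.1 < p.1 ∧ p.2.2 < p.2.1) :
    6 * #F ≤
      #((F.image fun p => p.1) ∪ (F.image fun p => p.2.1) ∪ (F.image fun p => p.2.2)) ^ 3 :=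
  (Nat.mul_le_mul_left 6 (card_le_choose_three_card_coords hF)).trans
    (descFactorial_eq_factorial_mul_choose _ 3 ▸ descFactorial_le_pow _ 3)

end StrictlyDecreasingTriples

theorem Nat.cast_mul_sub_one_mul_sub_two_nonneg {R : Type*} [CommRing R] [LinearOrder R]
    [IsStrictOrderedRing R] (n : ℕ) : 0 ≤ (n : R) * (n - 1) * (n - 2) := by
  rcases n with _ | _ | n
  · simp
  · simp
  · push_cast; ring_nf; positivity

theorem Real.rpow_one_div_three_le {x y : ℝ} (hx : 0 ≤ x) (hy : 0 ≤ y) (h : x ≤ y ^ 3) :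
    x ^ (1 / 3 : ℝ) ≤ y := by
  rwa [one_div, Real.rpow_inv_le_iff_of_pos hx hy three_pos, Real.rpow_ofNat]

theorem data_access_lower_bound_general (n : ℕ) (P : ℝ) (hP : 1 ≤ P)
    (F : Finset (ℤ × ℤ × ℤ))
    (hF : ∀ p ∈ F, (1 ≤ p.1 ∧ p.1 ≤ n) ∧ (1 ≤ p.2.1 ∧ p.2.1 ≤ n) ∧
      (1 ≤ p.2.2 ∧ p.2.2 ≤ n) ∧ p.1 > p.2.1 ∧ p.2.1 > p.2.2)
    (hcard : (F.card : ℝ) ≥ (n : ℝ) * ((n : ℝ) - 1) * ((n : ℝ) - 2) / (6 * P)) :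
    (F.card : ℝ) +
      2 * (((F.image fun p => p.1) ∪ (F.image fun p => p.2.1) ∪
            (F.image fun p => p.2.2)).card : ℝ) ≥
      (n : ℝ) * ((n : ℝ) - 1) * ((n : ℝ) - 2) / (6 * P) +
        2 * ((n : ℝ) * ((n : ℝ) - 1) * ((n : ℝ) - 2) / P) ^ ((1 : ℝ) / 3) := by
  set S := (F.image fun p => p.1) ∪ (F.image fun p => p.2.1) ∪ (F.image fun p => p.2.2)
  have hFS : 6 * #F ≤ #S ^ 3 :=
    six_mul_card_le_card_coords_pow_three fun p hp => ⟨(hF p hp).2.2.2.1, (hF p hp).2.2.2.2⟩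
  have hcube : (n : ℝ) * (n - 1) * (n - 2) / P ≤ (#S : ℝ) ^ 3 := calc
    (n : ℝ) * (n - 1) * (n - 2) / P = 6 * ((n : ℝ) * (n - 1) * (n - 2) / (6 * P)) := by ring
    _ ≤ 6 * #F := by linarith
    _ ≤ #S ^ 3 := mod_cast hFS
  have hroot := Real.rpow_one_div_three_le
    (div_nonneg (Nat.cast_mul_sub_one_mul_sub_two_nonneg n) (by linarith)) (Nat.cast_nonneg _) hcube
  linarith

/-- **Lower bound on data accessed by a processor.**
Let `n` be a positive integer and `P ≥ 1` a real number. For any finite set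
`F ⊆ {(i,j,k) ∈ {1,…,n}³ | i > j > k}` with `|F| ≥ n(n-1)(n-2)/(6P)`, one has
`|F| + 2|φ₁(F) ∪ φ₂(F) ∪ φ₃(F)| ≥ n(n-1)(n-2)/(6P) + 2(n(n-1)(n-2)/P)^(1/3)`. -/
theorem data_access_lower_bound (n : ℕ) (hn : 0 < n) (P : ℝ) (hP : 1 ≤ P)
    (F : Finset (ℤ × ℤ × ℤ))
    (hF : ∀ p ∈ F, (1 ≤ p.1 ∧ p.1 ≤ n) ∧ (1 ≤ p.2.1 ∧ p.2.1 ≤ n) ∧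
      (1 ≤ p.2.2 ∧ p.2.2 ≤ n) ∧ p.1 > p.2.1 ∧ p.2.1 > p.2.2)
    (hcard : (F.card : ℝ) ≥ (n : ℝ) * ((n : ℝ) - 1) * ((n : ℝ) - 2) / (6 * P)) :
    (F.card : ℝ) +
      2 * (((F.image fun p => p.1) ∪ (F.image fun p => p.2.1) ∪
            (F.image fun p => p.2.2)).card : ℝ) ≥
      (n : ℝ) * ((n : ℝ) - 1) * ((n : ℝ) - 2) / (6 * P) +
        2 * ((n : ℝ) * ((n : ℝ) - 1) * ((n : ℝ) - 2) / P) ^ ((1 : ℝ) / 3) :=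
  data_access_lower_bound_general n P hP F hF hcard
end

section
/- Let n be a positive integer and P ≥ 1 a real number. For any finite set F ⊆ {(i,j,k) ∈ {1,…,n}³ : i > j > k} with |F| ≥ n(n−1)(n−2)/(6P), and any real number D with D ≤ n(n−1)(n−2)/(6P) + 2n/P, one has |F| + 2|φ₁(F) ∪ φ₂(F) ∪ φ₃(F)| − D ≥ 2(n(n−1)(n−2)/P)^{1/3} − 2n/P. -/
/-!
A strictly decreasing triple is determined by its set of entries, so `F` embeds into the
3-element subsets of `U = φ₁(F) ∪ φ₂(F) ∪ φ₃(F)`. Hence `n(n-1)(n-2)/(6P) ≤ |F| ≤ C(|U|, 3) ≤ |U|³/6`,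
i.e. `|U| ≥ (n(n-1)(n-2)/P)^{1/3}`, while the bound on `D` gives `|F| - D ≥ -2n/P`.
-/

theorem triple_eq_of_insert_eq_of_strictAnti {α : Type*} [LinearOrder α] {a b c a' b' c' : α}
    (hab : b < a) (hbc : c < b) (hab' : b' < a') (hbc' : c' < b')
    (h : ({a, b, c} : Finset α) = {a', b', c'}) : (a, b, c) = (a', b', c') := by
  have ha : a ∈ ({a', b', c'} : Finset α) := h ▸ by simp
  have hb : b ∈ ({a', b', c'} : Finset α) := h ▸ by simp
  have hc : c ∈ ({a', b', c'} : Finset α) := h ▸ by simp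
  have ha' : a' ∈ ({a, b, c} : Finset α) := h ▸ by simp
  have hc' : c' ∈ ({a, b, c} : Finset α) := h ▸ by simp
  simp only [Finset.mem_insert, Finset.mem_singleton] at ha hb hc ha' hc'
  grind

theorem card_le_choose_three_of_strictAnti {α : Type*} [LinearOrder α]
    (F : Finset (α × α × α)) (hF : ∀ p ∈ F, p.2.1 < p.1 ∧ p.2.2 < p.2.1) :
    F.card ≤ ((F.image fun p => p.1) ∪ (F.image fun p => p.2.1) ∪
      (F.image fun p => p.2.2)).card.choose 3 := by
  rw [← Finset.card_powersetCard]
  refine Finset.card_le_card_of_injOn (fun p => {p.1, p.2.1, p.2.2}) ?_ ?_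
  · intro p hp
    rw [Finset.mem_coe] at hp
    obtain ⟨h1, h2⟩ := hF p hp
    rw [Finset.mem_coe, Finset.mem_powersetCard]
    constructor
    · intro x hx
      simp only [Finset.mem_insert, Finset.mem_singleton] at hx
      rcases hx with rfl | rfl | rfl
      · exact Finset.mem_union_left _ (Finset.mem_union_left _ (Finset.mem_image_of_mem _ hp))
      · exact Finset.mem_union_left _ (Finset.mem_union_right _ (Finset.mem_image_of_mem _ hp))
      · exact Finset.mem_union_right _ (Finset.mem_image_of_mem _ hp)
    · rw [Finset.card_insert_of_notMem (by simp [h1.ne', (h2.trans h1).ne']),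
        Finset.card_pair h2.ne']
  · intro p hp q hq hpq
    obtain ⟨hp1, hp2⟩ := hF p hp
    obtain ⟨hq1, hq2⟩ := hF q hq
    exact triple_eq_of_insert_eq_of_strictAnti hp1 hp2 hq1 hq2 hpq

theorem Real.rpow_one_div_three_le_of_le_pow_three {a v : ℝ} (ha : 0 ≤ a) (hv : 0 ≤ v)
    (h : a ≤ v ^ 3) : a ^ ((1 : ℝ) / 3) ≤ v := by
  rw [one_div, Real.rpow_inv_le_iff_of_pos ha hv (by norm_num)]
  exact_mod_cast h

theorem Nat.cast_mul_sub_one_mul_sub_two_nonneg_s6 (n : ℕ) : 0 ≤ (n : ℝ) * (n - 1) * (n - 2) := by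
  rcases n with _ | _ | n
  · simp
  · simp
  · push_cast; ring_nf; positivity

theorem communication_lower_bound_general (n : ℕ) (P : ℝ) (hP : 1 ≤ P)
    (F : Finset (ℤ × ℤ × ℤ))
    (hF : ∀ p ∈ F, (1 ≤ p.1 ∧ p.1 ≤ n) ∧ (1 ≤ p.2.1 ∧ p.2.1 ≤ n) ∧
      (1 ≤ p.2.2 ∧ p.2.2 ≤ n) ∧ p.1 > p.2.1 ∧ p.2.1 > p.2.2)
    (hcard : (F.card : ℝ) ≥ (n : ℝ) * ((n : ℝ) - 1) * ((n : ℝ) - 2) / (6 * P))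
    (D : ℝ)
    (hD : D ≤ (n : ℝ) * ((n : ℝ) - 1) * ((n : ℝ) - 2) / (6 * P) + 2 * n / P) :
    (F.card : ℝ) +
      2 * (((F.image fun p => p.1) ∪ (F.image fun p => p.2.1) ∪
            (F.image fun p => p.2.2)).card : ℝ) - D ≥
      2 * ((n : ℝ) * ((n : ℝ) - 1) * ((n : ℝ) - 2) / P) ^ ((1 : ℝ) / 3) -
        2 * n / P := by
  set v := ((F.image fun p => p.1) ∪ (F.image fun p => p.2.1) ∪ (F.image fun p => p.2.2)).card
  set N : ℝ := (n : ℝ) * ((n : ℝ) - 1) * ((n : ℝ) - 2)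
  have hPpos : 0 < P := one_pos.trans_le hP
  have hFv : (F.card : ℝ) ≤ (v : ℝ) ^ 3 / 6 := by
    have hF' : F.card ≤ v.choose 3 :=
      card_le_choose_three_of_strictAnti F fun p hp => ⟨(hF p hp).2.2.2.1, (hF p hp).2.2.2.2⟩
    have hchoose : (v.choose 3 : ℝ) ≤ (v : ℝ) ^ 3 / 6 := by
      simpa [Nat.factorial] using Nat.choose_le_pow_div (α := ℝ) 3 v
    exact (Nat.cast_le.mpr hF').trans hchoose
  have hNv : N / P ≤ (v : ℝ) ^ 3 := by
    rw [mul_comm, ← div_div] at hcard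
    linarith
  have hroot : (N / P) ^ ((1 : ℝ) / 3) ≤ v :=
    Real.rpow_one_div_three_le_of_le_pow_three
      (div_nonneg (Nat.cast_mul_sub_one_mul_sub_two_nonneg_s6 n) hPpos.le) v.cast_nonneg hNv
  linarith

/-- **Communication lower bound (Theorem 5.1 / `thm:memindeplb`).**
Let `n` be a positive integer and `P ≥ 1` a real number. For any finite set
`F ⊆ {(i,j,k) ∈ {1,…,n}³ | i > j > k}` with `|F| ≥ n(n-1)(n-2)/(6P)`, and any
real `D ≤ n(n-1)(n-2)/(6P) + 2n/P`, one has
`|F| + 2|φ₁(F) ∪ φ₂(F) ∪ φ₃(F)| - D ≥ 2(n(n-1)(n-2)/P)^(1/3) - 2n/P`. -/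
theorem communication_lower_bound (n : ℕ) (hn : 0 < n) (P : ℝ) (hP : 1 ≤ P)
    (F : Finset (ℤ × ℤ × ℤ))
    (hF : ∀ p ∈ F, (1 ≤ p.1 ∧ p.1 ≤ n) ∧ (1 ≤ p.2.1 ∧ p.2.1 ≤ n) ∧
      (1 ≤ p.2.2 ∧ p.2.2 ≤ n) ∧ p.1 > p.2.1 ∧ p.2.1 > p.2.2)
    (hcard : (F.card : ℝ) ≥ (n : ℝ) * ((n : ℝ) - 1) * ((n : ℝ) - 2) / (6 * P))
    (D : ℝ)
    (hD : D ≤ (n : ℝ) * ((n : ℝ) - 1) * ((n : ℝ) - 2) / (6 * P) + 2 * n / P) :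
    (F.card : ℝ) +
      2 * (((F.image fun p => p.1) ∪ (F.image fun p => p.2.1) ∪
            (F.image fun p => p.2.2)).card : ℝ) - D ≥
      2 * ((n : ℝ) * ((n : ℝ) - 1) * ((n : ℝ) - 2) / P) ^ ((1 : ℝ) / 3) -
        2 * n / P :=
  communication_lower_bound_general n P hP F hF hcard D hD
end

section
/- Let G = (X, Y, E) be a finite bipartite graph and d a positive integer. If d·|W| ≤ |N_G(W)| for every subset W ⊆ X, where N_G(W) denotes the set of vertices in Y adjacent to at least one vertex of W, then there exist d matchings M₁, …, M_d in G, each of which saturates every vertex of X, such that the sets of Y-vertices covered by distinct matchings are pairwise disjoint (so in particular the matchings are pairwise edge-disjoint and each covers exactly |X| distinct vertices of Y). -/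
open Finset Function

/-!
Hall's theorem applied to the graph in which every vertex `x ∈ X` is replaced by `d` copies
`(x, i)`, each adjacent to the neighbours of `x`: a set `A` of copies lies over at least
`|A| / d` vertices of `X`, so the `d`-fold Hall condition is the ordinary Hall condition for
the copies. A matching of the copies saturating them gives the `d` matchings `x ↦ g (x, i)`.
-/

theorem Finset.card_le_card_mul_card_image_fst {α ι : Type*} [DecidableEq α] [Fintype ι]
    (A : Finset (α × ι)) : #A ≤ Fintype.card ι * #(A.image Prod.fst) :=
  calc #A ≤ #(A.image Prod.fst ×ˢ (univ : Finset ι)) :=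
        card_le_card fun p hp => mem_product.2 ⟨mem_image_of_mem _ hp, mem_univ _⟩
    _ = Fintype.card ι * #(A.image Prod.fst) := by rw [card_product, card_univ, mul_comm]

theorem exists_injective_prod_of_forall_card_mul_le {α β ι : Type*} [Fintype β] [Fintype ι]
    (r : α → β → Prop) [DecidableRel r]
    (hall : ∀ W : Finset α, Fintype.card ι * #W ≤ #{b | ∃ a ∈ W, r a b}) :
    ∃ g : α × ι → β, Injective g ∧ ∀ p, r p.1 (g p) := by
  classical
  refine (Fintype.all_card_le_filter_rel_iff_exists_injective fun (p : α × ι) b => r p.1 b).1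
    fun A => ?_
  calc #A ≤ Fintype.card ι * #(A.image Prod.fst) := A.card_le_card_mul_card_image_fst
    _ ≤ #{b | ∃ a ∈ A.image Prod.fst, r a b} := hall _
    _ = #{b | ∃ p ∈ A, r p.1 b} := by congr 1; ext b; simp

open scoped Classical in
theorem d_disjoint_matchings_of_hall_general {X Y : Type*} [Fintype Y]
    (E : X → Y → Prop) (d : ℕ)
    (hall : ∀ W : Finset X,
      d * W.card ≤ (Finset.univ.filter fun y => ∃ x ∈ W, E x y).card) :
    ∃ f : Fin d → X → Y,
      (∀ i, Function.Injective (f i)) ∧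
      (∀ i x, E x (f i x)) ∧
      (∀ i j x x', i ≠ j → f i x ≠ f j x') := by
  obtain ⟨g, hg_inj, hg_adj⟩ :=
    exists_injective_prod_of_forall_card_mul_le (ι := Fin d) E (by simpa using hall)
  refine ⟨fun i x => g (x, i), fun i x x' h => (Prod.ext_iff.1 (hg_inj h)).1,
    fun i x => hg_adj (x, i), fun i j x x' hij h => hij (Prod.ext_iff.1 (hg_inj h)).2⟩

open scoped Classical in
/-- **`d`-fold Hall's theorem (Corollary 6.7 / `cor:hall:dgraphformulation`).**
Let `G = (X, Y, E)` be a finite bipartite graph (encoded by the adjacency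
relation `E : X → Y → Prop`) and `d` a positive integer. If
`d·|W| ≤ |N_G(W)|` for every `W ⊆ X`, then there exist `d` matchings
(encoded as injective functions `f i : X → Y` whose graphs consist of edges),
each saturating `X`, whose sets of covered `Y`-vertices are pairwise
disjoint (so in particular the matchings are pairwise edge-disjoint and each
covers exactly `|X|` distinct vertices of `Y`). -/
theorem d_disjoint_matchings_of_hall {X Y : Type*} [Fintype X] [Fintype Y]
    (E : X → Y → Prop) (d : ℕ) (hd : 0 < d)
    (hall : ∀ W : Finset X,
      d * W.card ≤ (Finset.univ.filter fun y => ∃ x ∈ W, E x y).card) :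
    ∃ f : Fin d → X → Y,
      (∀ i, Function.Injective (f i)) ∧
      (∀ i x, E x (f i x)) ∧
      (∀ i j x x', i ≠ j → f i x ≠ f j x') :=
  d_disjoint_matchings_of_hall_general E d hall
end

section
/- Let q be a prime power and α ≥ 1 an integer, let K = 𝔽_{q^α} be the field with q^α elements containing the subfield F = 𝔽_q with q elements, and let S ⊆ P¹(K) be the image of the natural inclusion of P¹(F) into P¹(K). Then the orbit {g·S : g ∈ PGL₂(K)} of S under the action of PGL₂(K) is a Steiner (q^α+1, q+1, 3) system on the (q^α+1)-element set P¹(K). -/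
/-!
Every ordered triple of distinct points of `ℙ¹(K)` is the image of `(∞, 0, 1)` under some
`g ∈ GL₂(K)`, and `g` is unique up to scalars, since a linear map fixing the lines of
`(1, 0)`, `(0, 1)` and `(1, 1)` is scalar. When the three points lie in `ℙ¹(F)`, `g` can be
taken with entries in `F` (Cramer's rule), so it preserves `ℙ¹(F)`. Hence a block `g • ℙ¹(F)`
containing `∞, 0, 1` is `ℙ¹(F)` itself, and by translating, any three distinct points lie in
exactly one block. The block sizes come from `|ℙ¹(F)| = |F| + 1`.
-/

open scoped LinearAlgebra.Projectivization Pointwise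
open Projectivization

namespace ProjectiveLine

section Field

variable {K : Type*} [Field K]

def cross (u v : K × K) : K := u.1 * v.2 - u.2 * v.1

theorem mk_eq_mk_iff_cross_eq_zero {u v : K × K} (hu : u ≠ 0) (hv : v ≠ 0) :
    mk K u hu = mk K v hv ↔ cross u v = 0 := by
  obtain ⟨u₁, u₂⟩ := u
  obtain ⟨v₁, v₂⟩ := v
  rw [mk_eq_mk_iff', cross]
  constructor
  · rintro ⟨a, ha⟩
    simp only [Prod.smul_mk, smul_eq_mul, Prod.mk.injEq] at ha
    rw [← ha.1, ← ha.2]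
    ring
  · intro h
    by_cases h₁ : v₁ = 0
    · have h₂ : v₂ ≠ 0 := fun h₂ ↦ hv (by simp [h₁, h₂])
      have hu₁ : u₁ = 0 := by simpa [h₁, h₂] using h
      exact ⟨u₂ / v₂, by simp [h₁, hu₁, h₂]⟩
    · refine ⟨u₁ / v₁, ?_⟩
      simp only [Prod.smul_mk, smul_eq_mul, Prod.mk.injEq]
      constructor
      · field_simp
      · field_simp
        linear_combination h

theorem cross_ne_zero_of_mk_ne_mk {u v : K × K} {hu : u ≠ 0} {hv : v ≠ 0}
    (h : mk K u hu ≠ mk K v hv) : cross u v ≠ 0 :=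
  mt (mk_eq_mk_iff_cross_eq_zero hu hv).mpr h

theorem cross_smul_add_cross_smul (u v x : K × K) :
    cross x v • u + cross u x • v = cross u v • x := by
  ext <;> simp only [cross, Prod.fst_add, Prod.snd_add, Prod.smul_fst, Prod.smul_snd,
    smul_eq_mul] <;> ring

def basisEquiv (u v : K × K) (h : cross u v ≠ 0) : (K × K) ≃ₗ[K] (K × K) where
  toFun p := p.1 • u + p.2 • v
  map_add' p p' := by simp only [Prod.fst_add, Prod.snd_add, add_smul]; abel
  map_smul' a p := by simp only [Prod.smul_fst, Prod.smul_snd, smul_add, smul_smul]; rfl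
  invFun x := (cross x v / cross u v, cross u x / cross u v)
  left_inv p := by
    ext <;> dsimp only <;> rw [div_eq_iff h] <;>
      simp only [cross, Prod.fst_add, Prod.snd_add, Prod.smul_fst, Prod.smul_snd,
        smul_eq_mul] <;> ring
  right_inv x := by
    calc (cross x v / cross u v) • u + (cross u x / cross u v) • v
        = (cross u v)⁻¹ • (cross x v • u + cross u x • v) := by
          simp only [div_eq_inv_mul, mul_smul, smul_add]
      _ = x := by rw [cross_smul_add_cross_smul, inv_smul_smul₀ h]

theorem basisEquiv_apply (u v : K × K) (h : cross u v ≠ 0) (p : K × K) :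
    basisEquiv u v h p = p.1 • u + p.2 • v := rfl

variable (K) in
def infty : ℙ K (K × K) := mk K (1, 0) (by simp)

variable (K) in
def zero : ℙ K (K × K) := mk K (0, 1) (by simp)

variable (K) in
def one : ℙ K (K × K) := mk K (1, 1) (by simp)

theorem smul_eq_self_of_fixes {g : (K × K) ≃ₗ[K] (K × K)} (hinf : g • infty K = infty K)
    (h₀ : g • zero K = zero K) (h₁ : g • one K = one K) (x : ℙ K (K × K)) : g • x = x := by
  simp only [infty, zero, one, smul_mk, LinearEquiv.smul_def, mk_eq_mk_iff'] at hinf h₀ h₁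
  obtain ⟨a, ha⟩ := hinf
  obtain ⟨b, hb⟩ := h₀
  obtain ⟨c, hc⟩ := h₁
  have hab : a = b := by
    have : ((1 : K), (1 : K)) = (1, 0) + (0, 1) := by simp
    rw [this, map_add, ← ha, ← hb] at hc
    simp only [Prod.smul_mk, smul_eq_mul, mul_one, mul_zero, Prod.mk_add_mk, add_zero,
      zero_add, Prod.mk.injEq] at hc
    rw [← hc.1, hc.2]
  have hg : ∀ v, g v = a • v := fun v ↦ by
    have : v = v.1 • ((1 : K), (0 : K)) + v.2 • ((0 : K), (1 : K)) := by ext <;> simp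
    rw [this, map_add, map_smul, map_smul, ← ha, ← hb, ← hab, smul_comm v.1, smul_comm v.2,
      ← smul_add]
  induction x using ind with
  | h v hv => rw [smul_mk, mk_eq_mk_iff']; exact ⟨a, (hg v).symm⟩

theorem basisEquiv_smul_infty {u v : K × K} (h : cross u v ≠ 0) (hu : u ≠ 0) :
    basisEquiv u v h • infty K = mk K u hu := by
  simp [infty, basisEquiv_apply]

theorem basisEquiv_smul_zero {u v : K × K} (h : cross u v ≠ 0) (hv : v ≠ 0) :
    basisEquiv u v h • zero K = mk K v hv := by
  simp [zero, basisEquiv_apply]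

theorem basisEquiv_smul_one {u v : K × K} (h : cross u v ≠ 0) (huv : u + v ≠ 0) :
    basisEquiv u v h • one K = mk K (u + v) huv := by
  simp [one, basisEquiv_apply]

end Field

section Subfield

variable {K : Type*} [Field K] (F : Subfield K)

def rationalPoints : Set (ℙ K (K × K)) :=
  {x | ∃ (v : K × K) (hv : v ≠ 0), v.1 ∈ F ∧ v.2 ∈ F ∧ x = mk K v hv}

theorem infty_mem_rationalPoints : infty K ∈ rationalPoints F :=
  ⟨(1, 0), _, one_mem F, zero_mem F, rfl⟩

theorem zero_mem_rationalPoints : zero K ∈ rationalPoints F :=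
  ⟨(0, 1), _, zero_mem F, one_mem F, rfl⟩

theorem one_mem_rationalPoints : one K ∈ rationalPoints F :=
  ⟨(1, 1), _, one_mem F, one_mem F, rfl⟩

theorem mem_rationalPoints_top (x : ℙ K (K × K)) : x ∈ rationalPoints (⊤ : Subfield K) := by
  induction x using ind with
  | h v hv => exact ⟨v, hv, Subfield.mem_top _, Subfield.mem_top _, rfl⟩

variable {F}

theorem cross_mem {u v : K × K} (hu : u ∈ (F : Set K) ×ˢ F)
    (hv : v ∈ (F : Set K) ×ˢ F) : cross u v ∈ F :=
  sub_mem (mul_mem hu.1 hv.2) (mul_mem hu.2 hv.1)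

theorem smul_mem_prod {c : K} (hc : c ∈ F) {v : K × K} (hv : v ∈ (F : Set K) ×ˢ F) :
    c • v ∈ (F : Set K) ×ˢ F :=
  ⟨mul_mem hc hv.1, mul_mem hc hv.2⟩

theorem smul_rationalPoints_subset {g : (K × K) ≃ₗ[K] (K × K)}
    (hg : Set.MapsTo g (F ×ˢ F) (F ×ˢ F)) : g • rationalPoints F ⊆ rationalPoints F := by
  rintro _ ⟨_, ⟨v, hv, hv₁, hv₂, rfl⟩, rfl⟩
  obtain ⟨hgv₁, hgv₂⟩ := hg ⟨hv₁, hv₂⟩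
  exact ⟨g v, _, hgv₁, hgv₂, rfl⟩

theorem smul_rationalPoints_eq {g : (K × K) ≃ₗ[K] (K × K)}
    (hg : Set.MapsTo g (F ×ˢ F) (F ×ˢ F)) (hg' : Set.MapsTo g.symm (F ×ˢ F) (F ×ˢ F)) :
    g • rationalPoints F = rationalPoints F :=
  (smul_rationalPoints_subset hg).antisymm
    (Set.subset_smul_set_iff.mpr (smul_rationalPoints_subset (g := g⁻¹) hg'))

theorem mapsTo_basisEquiv {u v : K × K} (hu : u ∈ (F : Set K) ×ˢ F)
    (hv : v ∈ (F : Set K) ×ˢ F) (h : cross u v ≠ 0) :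
    Set.MapsTo (basisEquiv u v h) (F ×ˢ F) (F ×ˢ F) := fun _ hp ↦
  ⟨add_mem (mul_mem hp.1 hu.1) (mul_mem hp.2 hv.1),
    add_mem (mul_mem hp.1 hu.2) (mul_mem hp.2 hv.2)⟩

theorem mapsTo_basisEquiv_symm {u v : K × K} (hu : u ∈ (F : Set K) ×ˢ F)
    (hv : v ∈ (F : Set K) ×ˢ F) (h : cross u v ≠ 0) :
    Set.MapsTo (basisEquiv u v h).symm (F ×ˢ F) (F ×ˢ F) := fun _ hx ↦
  ⟨div_mem (cross_mem hx hv) (cross_mem hu hv), div_mem (cross_mem hu hx) (cross_mem hu hv)⟩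

theorem exists_smul_eq_triple {x y z : ℙ K (K × K)} (hx : x ∈ rationalPoints F)
    (hy : y ∈ rationalPoints F) (hz : z ∈ rationalPoints F)
    (hxy : x ≠ y) (hxz : x ≠ z) (hyz : y ≠ z) :
    ∃ g : (K × K) ≃ₗ[K] (K × K), g • infty K = x ∧ g • zero K = y ∧ g • one K = z ∧
      g • rationalPoints F = rationalPoints F := by
  obtain ⟨u, hu, hu₁, hu₂, rfl⟩ := hx
  obtain ⟨v, hv, hv₁, hv₂, rfl⟩ := hy
  obtain ⟨w, hw, hw₁, hw₂, rfl⟩ := hz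
  have huv := cross_ne_zero_of_mk_ne_mk hxy
  have hwv := cross_ne_zero_of_mk_ne_mk hyz.symm
  have huw := cross_ne_zero_of_mk_ne_mk hxz
  -- rescale `u` and `v` so that they add up to a multiple of `w` (Cramer's rule)
  set u' := cross w v • u
  set v' := cross u w • v
  have hu' : u' ≠ 0 := smul_ne_zero hwv hu
  have hv' : v' ≠ 0 := smul_ne_zero huw hv
  have hw' : u' + v' = cross u v • w := cross_smul_add_cross_smul u v w
  have h : cross u' v' ≠ 0 := by
    have : cross u' v' = cross w v * cross u w * cross u v := by
      simp only [u', v', cross, Prod.smul_fst, Prod.smul_snd, smul_eq_mul]; ring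
    rw [this]
    exact mul_ne_zero (mul_ne_zero hwv huw) huv
  have hu'F : u' ∈ (F : Set K) ×ˢ F :=
    smul_mem_prod (cross_mem ⟨hw₁, hw₂⟩ ⟨hv₁, hv₂⟩) ⟨hu₁, hu₂⟩
  have hv'F : v' ∈ (F : Set K) ×ˢ F :=
    smul_mem_prod (cross_mem ⟨hu₁, hu₂⟩ ⟨hw₁, hw₂⟩) ⟨hv₁, hv₂⟩
  refine ⟨basisEquiv u' v' h, ?_, ?_, ?_,
    smul_rationalPoints_eq (mapsTo_basisEquiv hu'F hv'F h) (mapsTo_basisEquiv_symm hu'F hv'F h)⟩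
  · rw [basisEquiv_smul_infty h hu', mk_eq_mk_iff']
    exact ⟨_, rfl⟩
  · rw [basisEquiv_smul_zero h hv', mk_eq_mk_iff']
    exact ⟨_, rfl⟩
  · rw [basisEquiv_smul_one h (hw' ▸ smul_ne_zero huv hw), mk_eq_mk_iff']
    exact ⟨_, hw'.symm⟩

theorem smul_rationalPoints_eq_self {g : (K × K) ≃ₗ[K] (K × K)}
    (hinf : infty K ∈ g • rationalPoints F) (h₀ : zero K ∈ g • rationalPoints F)
    (h₁ : one K ∈ g • rationalPoints F) : g • rationalPoints F = rationalPoints F := by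
  rw [Set.mem_smul_set_iff_inv_smul_mem] at hinf h₀ h₁
  have hinj : Function.Injective fun x : ℙ K (K × K) ↦ g⁻¹ • x := MulAction.injective g⁻¹
  obtain ⟨φ, hφinf, hφ₀, hφ₁, hφ⟩ := exists_smul_eq_triple hinf h₀ h₁
    (hinj.ne (by simp [infty, zero, mk_eq_mk_iff_cross_eq_zero, cross]))
    (hinj.ne (by simp [infty, one, mk_eq_mk_iff_cross_eq_zero, cross]))
    (hinj.ne (by simp [zero, one, mk_eq_mk_iff_cross_eq_zero, cross]))
  have hfix : ∀ x, (g * φ) • x = x := smul_eq_self_of_fixes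
    (by rw [mul_smul, hφinf, smul_inv_smul]) (by rw [mul_smul, hφ₀, smul_inv_smul])
    (by rw [mul_smul, hφ₁, smul_inv_smul])
  calc g • rationalPoints F = (g * φ) • rationalPoints F := by rw [mul_smul, hφ]
    _ = rationalPoints F := by rw [← Set.image_smul, funext hfix, Set.image_id']

theorem smul_rationalPoints_eq_of_subset {g h : (K × K) ≃ₗ[K] (K × K)}
    (hsub : {h • infty K, h • zero K, h • one K} ⊆ g • rationalPoints F) :
    g • rationalPoints F = h • rationalPoints F := by
  simp only [Set.insert_subset_iff, Set.singleton_subset_iff, ← Set.mem_inv_smul_set_iff,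
    smul_smul] at hsub
  obtain ⟨hinf, h₀, h₁⟩ := hsub
  calc g • rationalPoints F = h • (h⁻¹ * g) • rationalPoints F := by
        rw [smul_smul, mul_inv_cancel_left]
    _ = h • rationalPoints F := by rw [smul_rationalPoints_eq_self hinf h₀ h₁]

variable (F) in
def inclusion : F × F →ₛₗ[F.subtype] K × K where
  toFun := Prod.map (↑) (↑)
  map_add' _ _ := rfl
  map_smul' _ _ := rfl

variable (F) in
theorem inclusion_injective : Function.Injective (inclusion F) :=
  Prod.map_injective.mpr ⟨Subtype.val_injective, Subtype.val_injective⟩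

theorem cross_inclusion (u v : F × F) : cross (inclusion F u) (inclusion F v) = cross u v :=
  rfl

variable (F) in
theorem map_inclusion_injective :
    Function.Injective (map (inclusion F) (inclusion_injective F)) := by
  intro x y hxy
  induction x using ind with | h u hu =>
  induction y using ind with | h v hv =>
  rw [map_mk, map_mk, mk_eq_mk_iff_cross_eq_zero, cross_inclusion] at hxy
  rw [mk_eq_mk_iff_cross_eq_zero]
  exact_mod_cast hxy

variable (F) in
theorem range_map_inclusion :
    Set.range (map (inclusion F) (inclusion_injective F)) = rationalPoints F := by
  apply Set.Subset.antisymm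
  · rintro _ ⟨x, rfl⟩
    induction x using ind with
    | h u hu => exact ⟨inclusion F u, _, u.1.2, u.2.2, rfl⟩
  · rintro _ ⟨v, hv, hv₁, hv₂, rfl⟩
    have hv' : ((⟨v.1, hv₁⟩, ⟨v.2, hv₂⟩) : F × F) ≠ 0 := fun h ↦ hv (by
      simpa [Prod.ext_iff, ← Subtype.val_inj] using h)
    exact ⟨mk F _ hv', rfl⟩

variable (F) in
theorem ncard_rationalPoints [Finite F] : (rationalPoints F).ncard = Nat.card F + 1 := by
  rw [← range_map_inclusion, ← Nat.card_coe_set_eq,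
    Nat.card_range_of_injective (map_inclusion_injective F), card_of_finrank_two F _ (by simp)]

end Subfield

end ProjectiveLine

open ProjectiveLine

theorem spherical_geometry_steiner_system_general
    (q α : ℕ)
    (K : Type*) [Field K] [Finite K] (hK : Nat.card K = q ^ α)
    (F : Subfield K) (hF : Nat.card F = q)
    (S : Set (ℙ K (K × K)))
    (hS : S = {x : ℙ K (K × K) |
      ∃ (v : K × K) (hv : v ≠ 0), v.1 ∈ F ∧ v.2 ∈ F ∧
        x = Projectivization.mk K v hv})
    (Sys : Set (Set (ℙ K (K × K))))
    (hSys : Sys = {T : Set (ℙ K (K × K)) |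
      ∃ g : (K × K) ≃ₗ[K] (K × K),
        T = Projectivization.map g.toLinearMap g.injective '' S}) :
    Nat.card (ℙ K (K × K)) = q ^ α + 1 ∧
    (∀ B ∈ Sys, B.ncard = q + 1) ∧
    (∀ T : Set (ℙ K (K × K)), T.ncard = 3 → ∃! B, B ∈ Sys ∧ T ⊆ B) := by
  have hblock (g : (K × K) ≃ₗ[K] (K × K)) :
      Projectivization.map g.toLinearMap g.injective '' S = g • rationalPoints F :=
    hS ▸ (Set.image_smul : (g • ·) '' rationalPoints F = _)
  subst hSys
  refine ⟨by rw [card_of_finrank_two K _ (by simp), hK], ?_, ?_⟩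
  · rintro _ ⟨g, rfl⟩
    rw [hblock, Set.ncard_smul_set, ncard_rationalPoints, hF]
  · intro T hT
    obtain ⟨x, y, z, hxy, hxz, hyz, rfl⟩ := Set.ncard_eq_three.mp hT
    obtain ⟨h, rfl, rfl, rfl, -⟩ := exists_smul_eq_triple (mem_rationalPoints_top x)
      (mem_rationalPoints_top y) (mem_rationalPoints_top z) hxy hxz hyz
    refine ⟨h • rationalPoints F, ⟨⟨h, (hblock h).symm⟩, ?_⟩, ?_⟩
    · simp only [Set.insert_subset_iff, Set.singleton_subset_iff, Set.smul_mem_smul_set_iff]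
      exact ⟨infty_mem_rationalPoints F, zero_mem_rationalPoints F, one_mem_rationalPoints F⟩
    · rintro _ ⟨⟨g, rfl⟩, hsub⟩
      rw [hblock] at hsub ⊢
      exact smul_rationalPoints_eq_of_subset hsub

/-- **Spherical geometries give Steiner systems
(Theorem 6.6 / `thm:sphericalDesigns`).**
Let `q = p^k` be a prime power and `α ≥ 1`, let `K` be the finite field with
`q^α` elements and `F ⊆ K` its subfield with `q` elements, and let
`S ⊆ ℙ¹(K) = ℙ K (K × K)` be the natural inclusion of `ℙ¹(F)` (the points
spanned by vectors with both coordinates in `F`). Then the orbit of `S`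
under the action of `PGL₂(K)` (equivalently, the set of images of `S` under
projectivized linear automorphisms of `K²`, since scalars act trivially) is a
Steiner `(q^α + 1, q + 1, 3)` system on the `(q^α + 1)`-element set `ℙ¹(K)`:
every block has `q + 1` elements and every `3`-element subset of `ℙ¹(K)` is
contained in exactly one block. -/
theorem spherical_geometry_steiner_system
    (q α : ℕ) (hq : ∃ p k : ℕ, p.Prime ∧ 0 < k ∧ q = p ^ k) (hα : 1 ≤ α)
    (K : Type*) [Field K] [Finite K] (hK : Nat.card K = q ^ α)
    (F : Subfield K) (hF : Nat.card F = q)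
    (S : Set (ℙ K (K × K)))
    (hS : S = {x : ℙ K (K × K) |
      ∃ (v : K × K) (hv : v ≠ 0), v.1 ∈ F ∧ v.2 ∈ F ∧
        x = Projectivization.mk K v hv})
    (Sys : Set (Set (ℙ K (K × K))))
    (hSys : Sys = {T : Set (ℙ K (K × K)) |
      ∃ g : (K × K) ≃ₗ[K] (K × K),
        T = Projectivization.map g.toLinearMap g.injective '' S}) :
    Nat.card (ℙ K (K × K)) = q ^ α + 1 ∧
    (∀ B ∈ Sys, B.ncard = q + 1) ∧
    (∀ T : Set (ℙ K (K × K)), T.ncard = 3 → ∃! B, B ∈ Sys ∧ T ⊆ B) :=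
  spherical_geometry_steiner_system_general q α K hK F hF S hS Sys hSys
end
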